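/- arXiv:2312.01400 — 2 statements merged into one kernel-verified Lean document; each statement's English description precedes it below -/
import Mathlib

section
/- Let m be even and let B be a real tensor of order m and dimension n. If B is an R tensor, then {𝓘, B} is an R tensor pair, where 𝓘 is the identity tensor of order m and dimension n. -/
open Finset

/-- A real tensor of order `m` and dimension `n`, indexed by a first index in `Fin n`
and `m - 1` further indices in `Fin n`. -/
abbrev Tensor (m n : ℕ) : Type := Fin n → (Fin (m - 1) → Fin n) → ℝ

/-- `tApp A x` is the vector `A x^{m-1}` with `i`-th component
`∑_{i₂,…,i_m} a_{i i₂ … i_m} x_{i₂} ⋯ x_{i_m}`. -/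
noncomputable def tApp {m n : ℕ} (A : Tensor m n) (x : Fin n → ℝ) : Fin n → ℝ :=
  fun i => ∑ j : Fin (m - 1) → Fin n, A i j * ∏ k, x (j k)

/-- The identity tensor: entries `1` when all indices coincide, `0` otherwise,
so that `tApp (idT m n) x = x^{[m-1]}`. -/
def idT (m n : ℕ) : Tensor m n :=
  fun i j => if (∀ k, j k = i) then 1 else 0

/-- The solution set of the horizontal tensor complementarity problem HTCP(A,B,q). -/
def SOL {m n : ℕ} (A B : Tensor m n) (q : Fin n → ℝ) :
    Set ((Fin n → ℝ) × (Fin n → ℝ)) :=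
  {p | p.1 ⊓ p.2 = 0 ∧ tApp A p.1 - tApp B p.2 = q}

/-- `{A,B}` is an R0 tensor pair. -/
def R0Pair {m n : ℕ} (A B : Tensor m n) : Prop :=
  ∀ x y : Fin n → ℝ, x ⊓ y = 0 → tApp A x - tApp B y = 0 → x = 0 ∧ y = 0

/-- `{A,B}` is a P tensor pair. -/
def PPair {m n : ℕ} (A B : Tensor m n) : Prop :=
  ∀ x y : Fin n → ℝ, x * y ≤ 0 → tApp A x - tApp B y = 0 → x = 0 ∧ y = 0

/-- `B` is an R0 tensor. -/
def R0Tensor {m n : ℕ} (B : Tensor m n) : Prop :=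
  ∀ x : Fin n → ℝ, x ⊓ tApp B x = 0 → x = 0

/-- `x` solves the tensor complementarity problem TCP(B,q). -/
def TCPsol {m n : ℕ} (B : Tensor m n) (q x : Fin n → ℝ) : Prop :=
  0 ≤ x ∧ 0 ≤ tApp B x + q ∧ x ⊓ (tApp B x + q) = 0

/-- `B` is an R tensor: an R0 tensor such that TCP(B,e) has a unique solution,
where `e = (1,…,1)`. -/
def RTensor {m n : ℕ} (B : Tensor m n) : Prop :=
  R0Tensor B ∧ ∃! x : Fin n → ℝ, TCPsol B (fun _ => 1) x

/-- `{A,B}` is an R tensor pair: an R0 tensor pair such that for some `q`,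
HTCP(A,B,q) has a unique solution `(x̄,ȳ)` with `x̄ + ȳ > 0`, and the linearized
HLCP(∇(A x̄^{m-1}), ∇(B ȳ^{m-1}), (m-1)q) has a unique solution. -/
def RPair {m n : ℕ} (A B : Tensor m n) : Prop :=
  R0Pair A B ∧ ∃ q xb yb : Fin n → ℝ,
    (∀ p : (Fin n → ℝ) × (Fin n → ℝ), p ∈ SOL A B q ↔ p = (xb, yb)) ∧
    (∀ i, 0 < xb i + yb i) ∧
    (∃! p : (Fin n → ℝ) × (Fin n → ℝ),
      p.1 ⊓ p.2 = 0 ∧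
      fderiv ℝ (tApp A) xb p.1 - fderiv ℝ (tApp B) yb p.2 = ((m - 1 : ℕ) : ℝ) • q)

/-!
A solution `(x, y)` of HTCP(𝓘, B, q) makes `y` a solution of TCP(B, q): `B y^{m-1} + q = x^{[m-1]}`
is nonnegative and vanishes wherever `x` does, i.e. wherever `y` may be positive. For `q = 0` the
R0 property of `B` then forces `y = 0`, hence `x = 0`; for `q = e` the unique solution of TCP(B, e)
is `0`, which forces `(x, y) = (e, 0)`, and `e + 0 > 0`. At `(e, 0)` the Jacobian of `x^{[m-1]}` is
`(m - 1) I`, while that of `B y^{m-1}` is `B` for `m = 2` and `0` for `m ≥ 3`, `B y^{m-1}` being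
homogeneous of degree `m - 1`; in either case the linearized HLCP has `(e, 0)` as its only solution.
-/

lemma min_pow_eq_zero_of_min_eq_zero {R : Type*} [Semiring R] [LinearOrder R] [IsOrderedRing R]
    {a b : R} {k : ℕ} (hk : k ≠ 0) (h : min a b = 0) :
    min b (a ^ k) = 0 := by
  rcases le_total a b with hab | hba
  · rw [min_eq_left hab] at h
    rw [h, zero_pow hk]
    exact min_eq_right (h ▸ hab)
  · rw [min_eq_right hba] at h
    rw [h]
    exact min_eq_left (pow_nonneg (h ▸ hba) k)

lemma fderiv_zero_apply_of_homogeneous {𝕜 E F : Type*} [NontriviallyNormedField 𝕜]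
    [NormedAddCommGroup E] [NormedSpace 𝕜 E] [NormedAddCommGroup F] [NormedSpace 𝕜 F]
    {f : E → F} {k : ℕ} (hf : DifferentiableAt 𝕜 f 0)
    (hom : ∀ (t : 𝕜) (x : E), f (t • x) = t ^ k • f x) (v : E) :
    fderiv 𝕜 f 0 v = ((k : 𝕜) * 0 ^ (k - 1)) • f v := by
  have hline : HasDerivAt (fun t : 𝕜 => f (t • v)) (fderiv 𝕜 f 0 v) 0 := by
    have hf' : HasFDerivAt f (fderiv 𝕜 f 0) ((0 : 𝕜) • v) := by
      rw [zero_smul]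
      exact hf.hasFDerivAt
    have hray : HasDerivAt (fun t : 𝕜 => t • v) v 0 := by
      simpa using (hasDerivAt_id' (0 : 𝕜)).smul_const v
    exact hf'.comp_hasDerivAt (0 : 𝕜) hray
  have hpow : HasDerivAt (fun t : 𝕜 => f (t • v)) (((k : 𝕜) * 0 ^ (k - 1)) • f v) 0 := by
    simp only [hom]
    exact (hasDerivAt_pow k (0 : 𝕜)).smul_const (f v)
  exact hline.unique hpow

section

variable {m n : ℕ}

lemma tApp_idT_apply (x : Fin n → ℝ) (i : Fin n) : tApp (idT m n) x i = x i ^ (m - 1) := by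
  unfold tApp idT
  rw [Finset.sum_eq_single (fun _ => i)]
  · simp
  · intro j _ hj
    rw [if_neg (fun h => hj (funext h)), zero_mul]
  · simp

lemma tApp_smul (B : Tensor m n) (t : ℝ) (x : Fin n → ℝ) :
    tApp B (t • x) = t ^ (m - 1) • tApp B x := by
  ext i
  simp only [tApp, Pi.smul_apply, smul_eq_mul, Finset.prod_mul_distrib, Finset.prod_const,
    Finset.card_univ, Fintype.card_fin, Finset.mul_sum]
  exact Finset.sum_congr rfl fun j _ => by ring

lemma tApp_zero (hm : 2 ≤ m) (B : Tensor m n) : tApp B 0 = 0 := by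
  simpa [zero_pow (show m - 1 ≠ 0 by omega)] using tApp_smul B 0 0

lemma differentiable_tApp (B : Tensor m n) : Differentiable ℝ (tApp B) := by
  unfold tApp
  fun_prop

lemma fderiv_tApp_zero_apply (B : Tensor m n) (v : Fin n → ℝ) :
    fderiv ℝ (tApp B) 0 v = (((m - 1 : ℕ) : ℝ) * 0 ^ (m - 1 - 1)) • tApp B v :=
  fderiv_zero_apply_of_homogeneous (differentiable_tApp B 0) (tApp_smul B) v

lemma fderiv_tApp_idT_apply (a v : Fin n → ℝ) (i : Fin n) :
    fderiv ℝ (tApp (idT m n)) a v i = ((m - 1 : ℕ) : ℝ) * a i ^ (m - 1 - 1) * v i := by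
  have hcoord : tApp (idT m n) = fun x i => x i ^ (m - 1) := by
    ext x i
    exact tApp_idT_apply x i
  have hderiv : HasFDerivAt (tApp (idT m n)) (ContinuousLinearMap.pi fun i =>
      (((m - 1 : ℕ) : ℝ) * a i ^ (m - 1 - 1)) •
        ContinuousLinearMap.proj (R := ℝ) (φ := fun _ : Fin n => ℝ) i) a := by
    rw [hcoord]
    exact hasFDerivAt_pi.mpr fun i =>
      (hasDerivAt_pow (m - 1) (a i)).comp_hasFDerivAt a (hasFDerivAt_apply i a)
  simp [hderiv.fderiv]

lemma tcpSol_zero (hm : 2 ≤ m) (B : Tensor m n) {q : Fin n → ℝ} (hq : 0 ≤ q) :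
    TCPsol B q 0 := by
  refine ⟨le_rfl, by simpa [tApp_zero hm] using hq, ?_⟩
  rw [tApp_zero hm, zero_add]
  exact inf_eq_left.mpr hq

lemma tcpSol_of_mem_SOL_idT (hm : 2 ≤ m) {B : Tensor m n} {q x y : Fin n → ℝ}
    (h : (x, y) ∈ SOL (idT m n) B q) : TCPsol B q y := by
  obtain ⟨hxy, heq⟩ := h
  have hmin : ∀ i, min (x i) (y i) = 0 := fun i => congrFun hxy i
  have hval : ∀ i, tApp B y i + q i = x i ^ (m - 1) := fun i => by
    rw [← tApp_idT_apply x i, ← heq]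
    simp
  have hcompl : ∀ i, min (y i) (x i ^ (m - 1)) = 0 := fun i =>
    min_pow_eq_zero_of_min_eq_zero (by omega) (hmin i)
  refine ⟨fun i => ?_, fun i => ?_, funext fun i => ?_⟩
  · exact (hmin i).symm.trans_le (min_le_right _ _)
  · rw [Pi.add_apply, hval]
    exact (hcompl i).symm.trans_le (min_le_right _ _)
  · rw [Pi.inf_apply, Pi.add_apply, hval]
    exact hcompl i

lemma mk_zero_mem_SOL_idT_iff (hm : 2 ≤ m) (B : Tensor m n) (q x : Fin n → ℝ) :
    (x, 0) ∈ SOL (idT m n) B q ↔ 0 ≤ x ∧ ∀ i, x i ^ (m - 1) = q i := by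
  change x ⊓ 0 = 0 ∧ tApp (idT m n) x - tApp B 0 = q ↔ _
  rw [inf_eq_right, tApp_zero hm, sub_zero, funext_iff]
  simp only [tApp_idT_apply]

lemma r0Pair_idT (hm : 2 ≤ m) {B : Tensor m n} (hB : R0Tensor B) : R0Pair (idT m n) B := by
  intro x y hxy heq
  have hsol : (x, y) ∈ SOL (idT m n) B 0 := ⟨hxy, heq⟩
  obtain rfl : y = 0 := hB y (by simpa using (tcpSol_of_mem_SOL_idT hm hsol).2.2)
  obtain ⟨-, hx⟩ := (mk_zero_mem_SOL_idT_iff hm B 0 x).mp hsol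
  exact ⟨funext fun i => pow_eq_zero_iff (by omega) |>.mp (hx i), rfl⟩

lemma mem_SOL_idT_one_iff (hm : 2 ≤ m) {B : Tensor m n} (hTCP : ∀ y, TCPsol B 1 y → y = 0)
    (p : (Fin n → ℝ) × (Fin n → ℝ)) : p ∈ SOL (idT m n) B 1 ↔ p = (1, 0) := by
  constructor
  · obtain ⟨x, y⟩ := p
    intro hp
    obtain rfl : y = 0 := hTCP y (tcpSol_of_mem_SOL_idT hm hp)
    obtain ⟨hx0, hx⟩ := (mk_zero_mem_SOL_idT_iff hm B 1 x).mp hp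
    exact Prod.ext (funext fun i => (pow_eq_one_iff_of_nonneg (hx0 i) (by omega)).mp (hx i)) rfl
  · rintro rfl
    exact (mk_zero_mem_SOL_idT_iff hm B 1 1).mpr ⟨zero_le_one, fun i => one_pow _⟩

lemma existsUnique_hlcp_idT (hm : 2 ≤ m) {B : Tensor m n}
    (hSOL : ∀ p, p ∈ SOL (idT m n) B 1 ↔ p = (1, 0)) :
    ∃! p : (Fin n → ℝ) × (Fin n → ℝ), p.1 ⊓ p.2 = 0 ∧
      fderiv ℝ (tApp (idT m n)) 1 p.1 - fderiv ℝ (tApp B) 0 p.2 = ((m - 1 : ℕ) : ℝ) • 1 := by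
  have hI : ∀ v, fderiv ℝ (tApp (idT m n)) 1 v = ((m - 1 : ℕ) : ℝ) • v := fun v => by
    ext i
    simp [fderiv_tApp_idT_apply]
  refine ⟨(1, 0), ⟨inf_eq_right.mpr zero_le_one, by simp [hI]⟩, ?_⟩
  rintro ⟨x, y⟩ ⟨hxy, heq⟩
  rw [hI, fderiv_tApp_zero_apply] at heq
  rcases hm.eq_or_lt with rfl | h3
  · refine (hSOL _).mp ⟨hxy, ?_⟩
    have hx : tApp (idT 2 n) x = x := funext fun i => by simp [tApp_idT_apply]
    simpa [hx] using heq
  · have hx : x = 1 := by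
      refine smul_right_injective (Fin n → ℝ) (r := ((m - 1 : ℕ) : ℝ)) (by norm_cast; omega) ?_
      simpa [zero_pow (show m - 1 - 1 ≠ 0 by omega)] using heq
    subst hx
    refine Prod.ext rfl (funext fun i => ?_)
    have hyi : min 1 (y i) = 0 := congrFun hxy i
    rcases min_eq_iff.mp hyi with h | h
    · norm_num at h
    · exact h.1

end

theorem rPair_of_rTensor_general (m n : ℕ) (hm : 2 ≤ m)
    (B : Tensor m n) (hB : RTensor B) : RPair (idT m n) B := by
  obtain ⟨hR0, hTCP⟩ := hB
  have hTCP_zero : ∀ y, TCPsol B 1 y → y = 0 := fun y hy =>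
    hTCP.unique hy (tcpSol_zero hm B zero_le_one)
  have hSOL := mem_SOL_idT_one_iff hm hTCP_zero
  exact ⟨r0Pair_idT hm hR0, 1, 1, 0, hSOL, fun _ => by simp, existsUnique_hlcp_idT hm hSOL⟩

/-- for even `m`, if `B` is an R tensor then `{𝓘, B}` is an R tensor pair. -/
theorem rPair_of_rTensor (m n : ℕ) (hm : 2 ≤ m) (hn : 1 ≤ n) (hme : Even m)
    (B : Tensor m n) (hB : RTensor B) : RPair (idT m n) B :=
  rPair_of_rTensor_general m n hm B hB
end

section
/- Let 𝓘 be the identity tensor of order 3 and dimension 2 and let B = −𝓘. Then {𝓘, −𝓘} is a P tensor pair (i.e., x * y ≤ 0 and x^{[2]} + y^{[2]} = 0 imply (x,y) = (0,0)), but HTCP(𝓘, −𝓘, q) with q = (0, −1)ᵀ has no solution, i.e. SOL(𝓘, −𝓘, (0,−1)ᵀ) is empty. Hence for odd order m a P tensor pair need not guarantee existence of solutions of the HTCP. -/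
open Finset

/-! For odd order `m`, `𝓘 x^{m-1} - (-𝓘) y^{m-1} = x^{[m-1]} + y^{[m-1]}` is a sum of even powers:
it vanishes only at `(0, 0)`, which makes `{𝓘, -𝓘}` a P pair, and it is never negative, so the
HTCP has no solution as soon as `q` has a negative component. -/

variable {m n : ℕ}

theorem tApp_neg (A : Tensor m n) (x : Fin n → ℝ) : tApp (-A) x = -tApp A x := by
  ext i
  simp only [tApp, Pi.neg_apply, neg_mul, Finset.sum_neg_distrib]

theorem tApp_idT (x : Fin n → ℝ) : tApp (idT m n) x = x ^ (m - 1) := by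
  ext i
  rw [tApp, Finset.sum_eq_single (fun _ => i)]
  · simp [idT]
  · intro j _ hj
    have : ¬ ∀ k, j k = i := fun h => hj (funext h)
    simp [idT, this]
  · simp

theorem tApp_idT_sub_tApp_neg_idT (x y : Fin n → ℝ) :
    tApp (idT m n) x - tApp (-(idT m n)) y = x ^ (m - 1) + y ^ (m - 1) := by
  rw [tApp_neg, tApp_idT, tApp_idT, sub_neg_eq_add]

theorem eq_zero_and_eq_zero_of_even_pow_add_pow_eq_zero {e : ℕ} (he : Even e) {a b : ℝ}
    (h : a ^ e + b ^ e = 0) : a = 0 ∧ b = 0 := by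
  rw [add_eq_zero_iff_of_nonneg (he.pow_nonneg a) (he.pow_nonneg b)] at h
  exact ⟨IsReduced.eq_zero a ⟨e, h.1⟩, IsReduced.eq_zero b ⟨e, h.2⟩⟩

theorem pPair_idT_neg_idT (hm : Even (m - 1)) : PPair (idT m n) (-(idT m n)) := by
  intro x y _ h
  rw [tApp_idT_sub_tApp_neg_idT] at h
  have hxy i := eq_zero_and_eq_zero_of_even_pow_add_pow_eq_zero hm (congrFun h i)
  exact ⟨funext fun i => (hxy i).1, funext fun i => (hxy i).2⟩

theorem SOL_idT_neg_idT_eq_empty (hm : Even (m - 1)) {q : Fin n → ℝ} {i : Fin n} (hq : q i < 0) :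
    SOL (idT m n) (-(idT m n)) q = ∅ := by
  refine Set.eq_empty_of_forall_notMem fun ⟨x, y⟩ ⟨_, h⟩ => hq.not_ge ?_
  rw [← h, tApp_idT_sub_tApp_neg_idT]
  exact add_nonneg (hm.pow_nonneg (x i)) (hm.pow_nonneg (y i))

/-- `{𝓘, -𝓘}` (order 3, dimension 2) is a P tensor pair, but
HTCP(𝓘, -𝓘, (0,-1)ᵀ) has no solution. -/
theorem pPair_without_existence :
    PPair (idT 3 2) (-(idT 3 2)) ∧ SOL (idT 3 2) (-(idT 3 2)) ![0, -1] = ∅ :=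
  ⟨pPair_idT_neg_idT even_two, SOL_idT_neg_idT_eq_empty even_two (i := 1) (by simp)⟩
end
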